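/- A linear code C of length n over R = F₂[v]/(v³ - v) is cyclic (σ(C) = C) if and only if its Gray image ψ(C) is a quasi-cyclic code of index 3 and length 3n over F₂ (i.e., φ(ψ(C)) = ψ(C)). -/

import Mathlib

open Polynomial Finset

set_option synthInstance.maxHeartbeats 1000000
set_option maxHeartbeats 1000000

/-- The ring `R = F₂[v]/(v³ - v)`. -/
abbrev R : Type := Polynomial (ZMod 2) ⧸ Ideal.span {(X : Polynomial (ZMod 2))^3 - X}

/-- `v`, the image of the indeterminate in `R`. -/
noncomputable def v : R := Ideal.Quotient.mk _ X

open Classical in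
/-- The Gray map `psi : R -> F2^3`, `psi (a + vb + v^2 c) = (a, b, a+c)`, given by its
table of values on the eight elements of `R`. -/
noncomputable def grayR (r : R) : ZMod 2 × ZMod 2 × ZMod 2 :=
  if r = 0 then (0, 0, 0)
  else if r = 1 then (1, 0, 1)
  else if r = v then (0, 1, 0)
  else if r = v^2 then (0, 0, 1)
  else if r = 1 + v then (1, 1, 1)
  else if r = 1 + v^2 then (1, 0, 0)
  else if r = v + v^2 then (0, 1, 1)
  else (1, 1, 0)

open Classical in
/-- The Lee weight on `R`: the Hamming weight of the Gray image. -/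
noncomputable def leeWt (r : R) : ℕ :=
  if r = 0 then 0
  else if r = v then 1
  else if r = v^2 then 1
  else if r = 1 + v^2 then 1
  else if r = 1 + v then 3
  else 2

/-- The Gray map extended coordinatewise, `Rⁿ → F₂ⁿ × F₂ⁿ × F₂ⁿ = F₂^{3n}`
(the three blocks of the image are the three components). -/
noncomputable def grayV {n : ℕ} (x : Fin n → R) :
    (Fin n → ZMod 2) × (Fin n → ZMod 2) × (Fin n → ZMod 2) :=
  (fun i => (grayR (x i)).1, fun i => (grayR (x i)).2.1, fun i => (grayR (x i)).2.2)

/-- The cyclic shift `(c₀, …, c_{n-1}) ↦ (c_{n-1}, c₀, …, c_{n-2})`. -/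
def shift {α : Type*} {n : ℕ} [NeZero n] (x : Fin n → α) : Fin n → α := fun i => x (i - 1)


/-! ### Auxiliary lemmas -/

noncomputable def e (a b c : ZMod 2) : R :=
  Ideal.Quotient.mk _ (C a + C b * X + C c * X^2)

lemma hf_monic : ((X : Polynomial (ZMod 2))^3 - X).Monic := by
  have := Polynomial.monic_X_pow_sub (p := (X : Polynomial (ZMod 2))) (n := 3) ?_
  · simpa using this
  · exact lt_of_le_of_lt Polynomial.degree_X_le (by norm_num)

lemma hf_deg : ((X : Polynomial (ZMod 2))^3 - X).degree = 3 := by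
  compute_degree!

lemma deg_poly3 (a b c : ZMod 2) : (C a + C b * X + C c * X^2).degree < 3 := by
  have : (C a + C b * X + C c * X^2).degree ≤ 2 := by compute_degree
  exact lt_of_le_of_lt this (by norm_num)

lemma e_eq_iff {a b c a' b' c' : ZMod 2} :
    e a b c = e a' b' c' ↔ a = a' ∧ b = b' ∧ c = c' := by
  constructor
  · intro h
    rw [e, e, Ideal.Quotient.eq, Ideal.mem_span_singleton] at h
    have hz := Polynomial.eq_zero_of_dvd_of_degree_lt h ?_
    · have hp : (C a + C b * X + C c * X^2 : Polynomial (ZMod 2))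
          = C a' + C b' * X + C c' * X^2 := by
        have := sub_eq_zero.mp hz; linear_combination this
      refine ⟨?_, ?_, ?_⟩
      · have := congrArg (fun p => Polynomial.coeff p 0) hp
        simpa [coeff_add, coeff_C, coeff_X, coeff_X_pow] using this
      · have := congrArg (fun p => Polynomial.coeff p 1) hp
        simpa [coeff_add, coeff_C, coeff_X, coeff_X_pow] using this
      · have := congrArg (fun p => Polynomial.coeff p 2) hp
        simpa [coeff_add, coeff_C, coeff_X, coeff_X_pow] using this
    · rw [hf_deg]
      calc ((C a + C b * X + C c * X^2) - (C a' + C b' * X + C c' * X^2)).degree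
          ≤ _ := Polynomial.degree_sub_le _ _
        _ < 3 := max_lt (deg_poly3 a b c) (deg_poly3 a' b' c')
  · rintro ⟨rfl, rfl, rfl⟩; rfl

lemma e_surj (r : R) : ∃ a b c : ZMod 2, r = e a b c := by
  obtain ⟨p, rfl⟩ := Ideal.Quotient.mk_surjective r
  set f : Polynomial (ZMod 2) := X^3 - X with hf
  refine ⟨(p %ₘ f).coeff 0, (p %ₘ f).coeff 1, (p %ₘ f).coeff 2, ?_⟩
  rw [e, Ideal.Quotient.eq, Ideal.mem_span_singleton]
  have hdeg : (p %ₘ f).degree < 3 := by rw [← hf_deg]; exact degree_modByMonic_lt p hf_monic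
  have hnd : (p %ₘ f).natDegree < 3 := by
    rcases eq_or_ne (p %ₘ f) 0 with h | h
    · simp [h]
    · exact (Polynomial.natDegree_lt_iff_degree_lt h).mpr hdeg
  have hrep : p %ₘ f = C ((p %ₘ f).coeff 0) + C ((p %ₘ f).coeff 1) * X
      + C ((p %ₘ f).coeff 2) * X^2 := by
    conv_lhs => rw [Polynomial.as_sum_range' _ 3 hnd]
    rw [Finset.sum_range_succ, Finset.sum_range_succ, Finset.sum_range_one]
    simp only [← Polynomial.C_mul_X_pow_eq_monomial]; ring
  rw [← hrep]
  have : p - p %ₘ f = f * (p /ₘ f) := by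
    have := Polynomial.modByMonic_add_div p f; linear_combination -this
  exact ⟨p /ₘ f, this⟩

lemma zero_eq : (0 : R) = e 0 0 0 := by simp [e]
lemma one_eq : (1 : R) = e 1 0 0 := by simp [e]
lemma v_eq : v = e 0 1 0 := by simp [e, v]
lemma vsq_eq : v^2 = e 0 0 1 := by
  simp only [e, v, ← map_pow]
  congr 1; simp

lemma e_add (a b c a' b' c' : ZMod 2) :
    e a b c + e a' b' c' = e (a+a') (b+b') (c+c') := by
  simp only [e, ← map_add]; congr 1; simp only [C_add]; ring

lemma zmod2_cases (a : ZMod 2) : a = 0 ∨ a = 1 := by revert a; decide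

lemma grayR_e (a b c : ZMod 2) : grayR (e a b c) = (a, b, a + c) := by
  rcases zmod2_cases a with rfl | rfl <;> rcases zmod2_cases b with rfl | rfl <;>
      rcases zmod2_cases c with rfl | rfl <;>
    · rw [grayR, show (0:R) = e 0 0 0 from zero_eq, show (1:R) = e 1 0 0 from one_eq,
        show v^2 = e 0 0 1 from vsq_eq, show v = e 0 1 0 from v_eq]
      simp only [e_add, e_eq_iff]
      norm_num
      all_goals decide

lemma grayR_inj : Function.Injective grayR := by
  intro r s h
  obtain ⟨a, b, c, rfl⟩ := e_surj r
  obtain ⟨a', b', c', rfl⟩ := e_surj s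
  rw [grayR_e, grayR_e, Prod.mk.injEq, Prod.mk.injEq] at h
  obtain ⟨ha, hb, hc⟩ := h
  subst ha; subst hb
  exact e_eq_iff.mpr ⟨rfl, rfl, by exact add_left_cancel hc⟩

lemma grayV_inj {n : ℕ} : Function.Injective (grayV (n := n)) := by
  intro x y h
  funext i
  apply grayR_inj
  have h1 := congrArg (fun t => t.1 i) h
  have h2 := congrArg (fun t => t.2.1 i) h
  have h3 := congrArg (fun t => t.2.2 i) h
  exact Prod.ext h1 (Prod.ext h2 h3)

/-- A linear code `C` over `R` is cyclic iff its Gray image `ψ(C)` is quasi-cyclic of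
index 3 and length `3n` over `F₂`. -/
theorem cyclic_iff_gray_quasicyclic {n : ℕ} [NeZero n] (C : Submodule R (Fin n → R)) :
    (shift '' (C : Set (Fin n → R)) = (C : Set (Fin n → R))) ↔
      ((fun t : (Fin n → ZMod 2) × (Fin n → ZMod 2) × (Fin n → ZMod 2) =>
          (shift t.1, shift t.2.1, shift t.2.2)) '' (grayV '' (C : Set (Fin n → R)))
        = grayV '' (C : Set (Fin n → R))) := by
  have key : (fun t : (Fin n → ZMod 2) × (Fin n → ZMod 2) × (Fin n → ZMod 2) =>
      (shift t.1, shift t.2.1, shift t.2.2)) '' (grayV '' (C : Set (Fin n → R)))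
      = grayV '' (shift '' (C : Set (Fin n → R))) := by
    rw [← Set.image_comp, ← Set.image_comp]
    congr 1
  rw [key, Set.image_eq_image grayV_inj]
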